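/- Let X ∈ ℝ^p be a random vector with E[X] = 0, E‖X‖⁴ < ∞ and B_X > 0, and let X₁, X₂, X₃, X₄, X₅ be independent copies of X. Then E[W₁₂·W₁₃·W₂₄·W₃₄] − 4·E[W₁₂·W₁₃·W₂₄·W₄₅] + 2·(E[W₁₂·W₁₃])² = 16 · B_X^{−4} · E[(X₁ᵀΣ_xX₂)²]. -/

import Mathlib

open MeasureTheory ProbabilityTheory Filter

noncomputable section

variable {E F : Type*}

/-- Double-centered distance associated with the law `μ`. -/
def dcd [NormedAddCommGroup E] [MeasurableSpace E] (μ : Measure E) (x₁ x₂ : E) : ℝ :=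
  ‖x₁ - x₂‖ - (∫ y, ‖x₁ - y‖ ∂μ) - (∫ y, ‖x₂ - y‖ ∂μ) + ∫ y, (∫ y', ‖y - y'‖ ∂μ) ∂μ

/-- Squared distance covariance of a joint law. -/
def dCov2 [NormedAddCommGroup E] [MeasurableSpace E] [NormedAddCommGroup F] [MeasurableSpace F]
    (μ : Measure (E × F)) : ℝ :=
  ∫ z₁, (∫ z₂, dcd (μ.map Prod.fst) z₁.1 z₂.1 * dcd (μ.map Prod.snd) z₁.2 z₂.2 ∂μ) ∂μ

/-- Squared distance variance of a law. -/
def dVar2 [NormedAddCommGroup E] [MeasurableSpace E] (μ : Measure E) : ℝ :=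
  ∫ x₁, (∫ x₂, dcd μ x₁ x₂ ^ 2 ∂μ) ∂μ

/-- Squared distance correlation of a joint law. -/
def dCor2 [NormedAddCommGroup E] [MeasurableSpace E] [NormedAddCommGroup F] [MeasurableSpace F]
    (μ : Measure (E × F)) : ℝ :=
  if 0 < dVar2 (μ.map Prod.fst) * dVar2 (μ.map Prod.snd) then
    dCov2 μ / Real.sqrt (dVar2 (μ.map Prod.fst) * dVar2 (μ.map Prod.snd))
  else 0

/-- `E(|d_X(X₁,X₂)|^r)`. -/
def dMom [NormedAddCommGroup E] [MeasurableSpace E] (μ : Measure E) (r : ℝ) : ℝ :=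
  ∫ x₁, (∫ x₂, |dcd μ x₁ x₂| ^ r ∂μ) ∂μ

/-- `E[g_X(X₁,X₂,X₃,X₄)]`. -/
def gMean [NormedAddCommGroup E] [MeasurableSpace E] (μ : Measure E) : ℝ :=
  ∫ x₁, (∫ x₂, (∫ x₃, (∫ x₄,
    dcd μ x₁ x₂ * dcd μ x₁ x₃ * dcd μ x₂ x₄ * dcd μ x₃ x₄ ∂μ) ∂μ) ∂μ) ∂μ

/-- The U-centered sample distances `A*_{kl}`. -/
def Astar [NormedAddCommGroup E] (n : ℕ) (xs : Fin n → E) (k l : Fin n) : ℝ :=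
  ‖xs k - xs l‖ - ((n : ℝ) - 2)⁻¹ * ∑ i, ‖xs i - xs l‖
    - ((n : ℝ) - 2)⁻¹ * ∑ j, ‖xs k - xs j‖
    + (((n : ℝ) - 1) * ((n : ℝ) - 2))⁻¹ * ∑ i, ∑ j, ‖xs i - xs j‖

/-- Bias-corrected sample distance covariance `V*ₙ`. -/
def Vstar [NormedAddCommGroup E] [NormedAddCommGroup F] (n : ℕ)
    (xs : Fin n → E) (ys : Fin n → F) : ℝ :=
  ((n : ℝ) * ((n : ℝ) - 3))⁻¹ *
    ∑ k, ∑ l, if k = l then 0 else Astar n xs k l * Astar n ys k l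

/-- Bias-corrected sample distance correlation `R*ₙ`. -/
def Rstar [NormedAddCommGroup E] [NormedAddCommGroup F] (n : ℕ)
    (xs : Fin n → E) (ys : Fin n → F) : ℝ :=
  if 0 < Vstar n xs xs * Vstar n ys ys then
    Vstar n xs ys / Real.sqrt (Vstar n xs xs * Vstar n ys ys)
  else 0

/-- Rescaled sample distance correlation statistic `Tₙ`. -/
def Tstat [NormedAddCommGroup E] [NormedAddCommGroup F] (n : ℕ)
    (xs : Fin n → E) (ys : Fin n → F) : ℝ :=
  Real.sqrt ((n : ℝ) * ((n : ℝ) - 1) / 2) * Rstar n xs ys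

/-- Studentized sample distance correlation statistic `T_R`. -/
def TRstat [NormedAddCommGroup E] [NormedAddCommGroup F] (n : ℕ)
    (xs : Fin n → E) (ys : Fin n → F) : ℝ :=
  Real.sqrt ((n : ℝ) * ((n : ℝ) - 3) / 2 - 1) * Rstar n xs ys /
    Real.sqrt (1 - Rstar n xs ys ^ 2)

/-- Law of an i.i.d. sample of size `n` from the joint law `μ`. -/
def sampleLaw [MeasurableSpace E] [MeasurableSpace F] (μ : Measure (E × F)) (n : ℕ) :
    Measure (Fin n → E × F) :=
  Measure.pi fun _ : Fin n => μ

/-- `P(Tₙ ∈ s)` under i.i.d. sampling of size `n` from `μ`. -/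
def Tprob [NormedAddCommGroup E] [MeasurableSpace E] [NormedAddCommGroup F] [MeasurableSpace F]
    (μ : Measure (E × F)) (n : ℕ) (s : Set ℝ) : ℝ :=
  (sampleLaw μ n {ω | Tstat n (fun i => (ω i).1) (fun i => (ω i).2) ∈ s}).toReal

/-- `P(T_R ∈ s)` under i.i.d. sampling of size `n` from `μ`. -/
def TRprob [NormedAddCommGroup E] [MeasurableSpace E] [NormedAddCommGroup F] [MeasurableSpace F]
    (μ : Measure (E × F)) (n : ℕ) (s : Set ℝ) : ℝ :=
  (sampleLaw μ n {ω | TRstat n (fun i => (ω i).1) (fun i => (ω i).2) ∈ s}).toReal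

/-- CDF of the standard normal distribution. -/
def stdGaussCDF (t : ℝ) : ℝ := (gaussianReal 0 1 (Set.Iic t)).toReal

/-- `B_X = E‖X₁ − X₂‖² = 2E‖X‖²`. -/
def Bmom [NormedAddCommGroup E] [MeasurableSpace E] (μ : Measure E) : ℝ :=
  2 * ∫ x, ‖x‖ ^ 2 ∂μ

/-- `L_{x,τ}`. -/
def Lmom [NormedAddCommGroup E] [InnerProductSpace ℝ E] [MeasurableSpace E]
    (μ : Measure E) (τ : ℝ) : ℝ :=
  (∫ x, |‖x‖ ^ 2 - ∫ y, ‖y‖ ^ 2 ∂μ| ^ (2 + 2 * τ) ∂μ)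
    + ∫ x₁, (∫ x₂, |(inner ℝ x₁ x₂ : ℝ)| ^ (2 + 2 * τ) ∂μ) ∂μ

/-- `E[(X₁ᵀX₂)²]`. -/
def sqInnerMom [NormedAddCommGroup E] [InnerProductSpace ℝ E] [MeasurableSpace E]
    (μ : Measure E) : ℝ :=
  ∫ x₁, (∫ x₂, (inner ℝ x₁ x₂ : ℝ) ^ 2 ∂μ) ∂μ

/-- `E[(X₁ᵀ Σ_x X₂)²]`, using `X₁ᵀ Σ_x X₂ = E_Z[⟪X₁, Z⟫ ⟪Z, X₂⟫]`. -/
def sigQuad [NormedAddCommGroup E] [InnerProductSpace ℝ E] [MeasurableSpace E]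
    (μ : Measure E) : ℝ :=
  ∫ x₁, (∫ x₂, (∫ z, (inner ℝ x₁ z : ℝ) * (inner ℝ z x₂ : ℝ) ∂μ) ^ 2 ∂μ) ∂μ

/-- `E_x`. -/
def Emom [NormedAddCommGroup E] [InnerProductSpace ℝ E] [MeasurableSpace E]
    (μ : Measure E) (τ : ℝ) : ℝ :=
  (sigQuad μ + Bmom μ ^ (-(2 * τ)) * Lmom μ τ ^ ((2 + τ) / (1 + τ))) / sqInnerMom μ ^ 2

/-- `𝒢₁(X) = |E[(X₁ᵀX₂)² X₁ᵀΣ_x²X₂]|`. -/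
def Gone [NormedAddCommGroup E] [InnerProductSpace ℝ E] [MeasurableSpace E]
    (μ : Measure E) : ℝ :=
  |∫ x₁, (∫ x₂, ((inner ℝ x₁ x₂ : ℝ) ^ 2 *
    ∫ z, (∫ w, (inner ℝ x₁ z : ℝ) * (inner ℝ z w : ℝ) * (inner ℝ w x₂ : ℝ) ∂μ) ∂μ) ∂μ) ∂μ|

/-- `𝒢₂(X) = E[‖X₁‖²(X₁ᵀΣ_xX₂)²]`. -/
def Gtwo [NormedAddCommGroup E] [InnerProductSpace ℝ E] [MeasurableSpace E]
    (μ : Measure E) : ℝ :=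
  ∫ x₁, (∫ x₂, ‖x₁‖ ^ 2 * (∫ z, (inner ℝ x₁ z : ℝ) * (inner ℝ z x₂ : ℝ) ∂μ) ^ 2 ∂μ) ∂μ

/-- `𝒢₃(X) = E[XᵀXXᵀ] Σ_x² E[XXᵀX]`. -/
def Gthree [NormedAddCommGroup E] [InnerProductSpace ℝ E] [MeasurableSpace E]
    (μ : Measure E) : ℝ :=
  ∫ x₁, (∫ z, (∫ w, (∫ x₂,
    ‖x₁‖ ^ 2 * (inner ℝ x₁ z : ℝ) * (inner ℝ z w : ℝ) * (inner ℝ w x₂ : ℝ) * ‖x₂‖ ^ 2 ∂μ) ∂μ) ∂μ) ∂μ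

/-- `N_τ(X)`. -/
def Nmom [NormedAddCommGroup E] [InnerProductSpace ℝ E] [MeasurableSpace E]
    (μ : Measure E) (τ : ℝ) : ℝ :=
  (sigQuad μ + Bmom μ ^ (-(2 * τ)) * Lmom μ τ ^ ((2 + τ) / (1 + τ))
      + (Bmom μ)⁻¹ * (Gone μ + Gtwo μ + Gthree μ)) / sqInnerMom μ ^ 2

/-- `W(x₁, x₂) = B_X⁻¹(‖x₁ − x₂‖² − B_X)`. -/
def Wfun [NormedAddCommGroup E] [MeasurableSpace E] (μ : Measure E) (x₁ x₂ : E) : ℝ :=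
  (Bmom μ)⁻¹ * (‖x₁ - x₂‖ ^ 2 - Bmom μ)

/-- The kernel `h`. -/
def hker [NormedAddCommGroup E] [NormedAddCommGroup F] (x : Fin 4 → E) (y : Fin 4 → F) : ℝ :=
  (1 / 4) * (∑ i, ∑ j, if i = j then 0 else ‖x i - x j‖ * ‖y i - y j‖)
    - (1 / 4) * ∑ i, ((∑ j, if j = i then 0 else ‖x i - x j‖) *
        (∑ j, if j = i then 0 else ‖y i - y j‖))
    + (1 / 24) * (∑ i, ∑ j, if i = j then 0 else ‖x i - x j‖) *
        (∑ i, ∑ j, if i = j then 0 else ‖y i - y j‖)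

/-- The coordinates of a law on `ℝ^p` form an `m`-dependent sequence: for every `j`, the first
`j` coordinates are independent of the coordinates with (one-based) index `≥ j + m + 1`. -/
def mdepLaw (p m : ℕ) (μ : Measure (EuclideanSpace ℝ (Fin p))) : Prop :=
  ∀ j : ℕ,
    μ.map (fun x => ((fun i : {i : Fin p // (i : ℕ) < j} => x i.1),
        (fun i : {i : Fin p // j + m ≤ (i : ℕ)} => x i.1)))
      = (μ.map fun x => fun i : {i : Fin p // (i : ℕ) < j} => x i.1).prod
          (μ.map fun x => fun i : {i : Fin p // j + m ≤ (i : ℕ)} => x i.1)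

/-- Joint law of `(X, Y)` where `Yⱼ = gⱼ(Xⱼ)`. -/
def jointLaw (p : ℕ) (μ : Measure (EuclideanSpace ℝ (Fin p))) (g : Fin p → ℝ → ℝ) :
    Measure (EuclideanSpace ℝ (Fin p) × EuclideanSpace ℝ (Fin p)) :=
  μ.map fun x => (x, (EuclideanSpace.equiv (Fin p) ℝ).symm fun j => g j (x j))

/-- Law of `Σ^{1/2} Z` for `Z` with i.i.d. standard normal coordinates. -/
def gaussLaw (p : ℕ) (S : Matrix (Fin p) (Fin p) ℝ) (hS : S.PosSemidef) :
    Measure (EuclideanSpace ℝ (Fin p)) :=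
  (Measure.pi fun _ : Fin p => gaussianReal 0 1).map
    (fun z => (EuclideanSpace.equiv (Fin p) ℝ).symm ((hS.1.eigenvectorUnitary.1 * Matrix.diagonal ((RCLike.ofReal : ℝ → ℝ) ∘ Real.sqrt ∘ hS.1.eigenvalues) *
      (star hS.1.eigenvectorUnitary : Matrix (Fin p) (Fin p) ℝ)).mulVec z))

namespace WM

variable {p : ℕ} (μ : Measure (EuclideanSpace ℝ (Fin p)))

abbrev Eu (p : ℕ) := EuclideanSpace ℝ (Fin p)

def mme : ℝ := ∫ x, ‖x‖ ^ 2 ∂μ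
def Ff (z : Eu p) : ℝ := ‖z‖ ^ 2 - mme μ
def sig2 : ℝ := ∫ z, Ff μ z ^ 2 ∂μ
def vv : Eu p := ∫ z, Ff μ z • z ∂μ
def Tt (w : Eu p) : Eu p := ∫ z, (inner ℝ z w : ℝ) • z ∂μ
def ip (a b : Eu p) : ℝ := inner ℝ a b
def Vf (x y : Eu p) : ℝ := Ff μ x + Ff μ y - 2 * ip x y
def Ss : ℝ := ∫ z, ip (Tt μ z) (Tt μ (Tt μ z)) ∂μ

lemma ipcomm (a b : Eu p) : ip a b = ip b a := real_inner_comm b a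

section Int

variable [IsProbabilityMeasure μ] (hmom : Integrable (fun x => ‖x‖ ^ 4) μ)
include hmom

lemma int_pow1 : Integrable (fun z : Eu p => ‖z‖) μ := by
  refine ((integrable_const 1).add hmom).mono' continuous_norm.aestronglyMeasurable
    (ae_of_all _ fun z => ?_)
  have t0 : (0:ℝ) ≤ ‖z‖ := norm_nonneg z
  simp only [norm_norm]
  show ‖z‖ ≤ 1 + ‖z‖^4
  nlinarith [sq_nonneg (‖z‖ - 1), sq_nonneg (‖z‖^2 - 1), sq_nonneg (‖z‖^2 - ‖z‖), sq_nonneg ‖z‖]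

lemma int_pow2 : Integrable (fun z : Eu p => ‖z‖ ^ 2) μ := by
  refine ((integrable_const 1).add hmom).mono'
    (continuous_norm.pow 2).aestronglyMeasurable (ae_of_all _ fun z => ?_)
  have t0 : (0:ℝ) ≤ ‖z‖ := norm_nonneg z
  rw [Real.norm_eq_abs, abs_of_nonneg (by positivity)]
  show ‖z‖^2 ≤ 1 + ‖z‖^4
  nlinarith [sq_nonneg (‖z‖^2 - 1)]

lemma int_pow3 : Integrable (fun z : Eu p => ‖z‖ ^ 3) μ := by
  refine ((integrable_const 1).add hmom).mono'
    (continuous_norm.pow 3).aestronglyMeasurable (ae_of_all _ fun z => ?_)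
  have t0 : (0:ℝ) ≤ ‖z‖ := norm_nonneg z
  rw [Real.norm_eq_abs, abs_of_nonneg (by positivity)]
  show ‖z‖^3 ≤ 1 + ‖z‖^4
  nlinarith [sq_nonneg (‖z‖ - 1), sq_nonneg (‖z‖^2 - 1), sq_nonneg (‖z‖^2 - ‖z‖)]

lemma int_id : Integrable (fun z : Eu p => z) μ := by
  refine ((integrable_const 1).add hmom).mono' continuous_id.aestronglyMeasurable
    (ae_of_all _ fun z => ?_)
  have t0 : (0:ℝ) ≤ ‖z‖ := norm_nonneg z
  show ‖z‖ ≤ 1 + ‖z‖^4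
  nlinarith [sq_nonneg (‖z‖ - 1), sq_nonneg (‖z‖^2 - 1), sq_nonneg (‖z‖^2 - ‖z‖), sq_nonneg ‖z‖]

lemma int_F : Integrable (Ff μ) μ := by
  have := (int_pow2 μ hmom).sub (integrable_const (mme μ))
  exact this

lemma int_F2 : Integrable (fun z => Ff μ z ^ 2) μ := by
  have h : (fun z : Eu p => Ff μ z ^ 2)
      = fun z => ‖z‖ ^ 4 - (2 * mme μ) * ‖z‖ ^ 2 + mme μ ^ 2 := by
    funext z; simp only [Ff]; ring
  rw [h]
  exact (hmom.sub ((int_pow2 μ hmom).const_mul _)).add (integrable_const _)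

lemma int_ip (a : Eu p) : Integrable (fun z => ip a z) μ := by
  refine ((int_pow1 μ hmom).const_mul ‖a‖).mono'
    (Continuous.aestronglyMeasurable
      (show Continuous fun z : Eu p => ip a z from continuous_const.inner continuous_id))
    (ae_of_all _ fun z => ?_)
  simpa [ip, Real.norm_eq_abs] using abs_real_inner_le_norm a z

omit [IsProbabilityMeasure μ] hmom in
lemma absF_le (z : Eu p) : |Ff μ z| ≤ ‖z‖ ^ 2 + |mme μ| := by
  simp only [Ff]
  calc |‖z‖ ^ 2 - mme μ| ≤ |‖z‖^2| + |mme μ| := abs_sub _ _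
  _ = ‖z‖^2 + |mme μ| := by rw [abs_of_nonneg (by positivity)]

lemma int_Fip (a : Eu p) : Integrable (fun z => Ff μ z * ip a z) μ := by
  have hg : Integrable (fun z : Eu p => ‖a‖ * (‖z‖ ^ 3 + |mme μ| * ‖z‖)) μ :=
    (((int_pow3 μ hmom)).add ((int_pow1 μ hmom).const_mul _)).const_mul _
  refine hg.mono' (Continuous.aestronglyMeasurable ?_) (ae_of_all _ fun z => ?_)
  · exact (((continuous_norm.pow 2).sub continuous_const).mul
      (continuous_const.inner continuous_id))
  · rw [Real.norm_eq_abs, abs_mul]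
    have h1 := absF_le μ z
    have h2 : |ip a z| ≤ ‖a‖ * ‖z‖ := abs_real_inner_le_norm a z
    calc |Ff μ z| * |ip a z| ≤ (‖z‖ ^ 2 + |mme μ|) * (‖a‖ * ‖z‖) :=
          mul_le_mul h1 h2 (abs_nonneg _) (by positivity)
      _ = ‖a‖ * (‖z‖ ^ 3 + |mme μ| * ‖z‖) := by ring

lemma int_ipip (a b : Eu p) : Integrable (fun z => ip a z * ip b z) μ := by
  refine (((int_pow2 μ hmom)).const_mul (‖a‖ * ‖b‖)).mono'
    (Continuous.aestronglyMeasurable ?_) (ae_of_all _ fun z => ?_)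
  · exact (continuous_const.inner continuous_id).mul (continuous_const.inner continuous_id)
  · rw [Real.norm_eq_abs, abs_mul]
    have h1 : |ip a z| ≤ ‖a‖ * ‖z‖ := abs_real_inner_le_norm a z
    have h2 : |ip b z| ≤ ‖b‖ * ‖z‖ := abs_real_inner_le_norm b z
    calc |ip a z| * |ip b z| ≤ (‖a‖ * ‖z‖) * (‖b‖ * ‖z‖) :=
          mul_le_mul h1 h2 (abs_nonneg _) (by positivity)
      _ = ‖a‖ * ‖b‖ * ‖z‖ ^ 2 := by ring

lemma int_Fsmul : Integrable (fun z : Eu p => Ff μ z • z) μ := by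
  have hg : Integrable (fun z : Eu p => ‖z‖ ^ 3 + |mme μ| * ‖z‖) μ :=
    (int_pow3 μ hmom).add ((int_pow1 μ hmom).const_mul _)
  refine hg.mono' (Continuous.aestronglyMeasurable
    ((((continuous_norm.pow 2).sub continuous_const)).smul continuous_id))
    (ae_of_all _ fun z => ?_)
  rw [norm_smul, Real.norm_eq_abs]
  have h1 := absF_le μ z
  calc |Ff μ z| * ‖z‖ ≤ (‖z‖ ^ 2 + |mme μ|) * ‖z‖ :=
        mul_le_mul_of_nonneg_right h1 (norm_nonneg z)
    _ = ‖z‖ ^ 3 + |mme μ| * ‖z‖ := by ring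

lemma int_Tsmul (b : Eu p) : Integrable (fun z : Eu p => (inner ℝ z b : ℝ) • z) μ := by
  refine ((int_pow2 μ hmom).const_mul ‖b‖).mono' (Continuous.aestronglyMeasurable
    ((continuous_id.inner continuous_const : Continuous fun z : Eu p => (inner ℝ z b : ℝ)).smul continuous_id))
    (ae_of_all _ fun z => ?_)
  rw [norm_smul, Real.norm_eq_abs]
  have h1 : |(inner ℝ z b : ℝ)| ≤ ‖z‖ * ‖b‖ := abs_real_inner_le_norm z b
  calc |(inner ℝ z b : ℝ)| * ‖z‖ ≤ (‖z‖ * ‖b‖) * ‖z‖ :=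
        mul_le_mul_of_nonneg_right h1 (norm_nonneg z)
    _ = ‖b‖ * ‖z‖ ^ 2 := by ring

end Int

section Eqs

variable [IsProbabilityMeasure μ] (hmean : (∫ x, x ∂μ) = 0)
    (hmom : Integrable (fun x => ‖x‖ ^ 4) μ)

include hmom

lemma intF_eq : (∫ z, Ff μ z ∂μ) = 0 := by
  simp only [Ff]
  rw [integral_sub (int_pow2 μ hmom) (integrable_const _), integral_const]
  simp [mme]

omit hmom in
lemma intF2_eq : (∫ z, Ff μ z ^ 2 ∂μ) = sig2 μ := rfl

include hmean in
lemma intIp_eq (a : Eu p) : (∫ z, ip a z ∂μ) = 0 := by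
  simp only [ip]
  rw [integral_inner (int_id μ hmom) a, hmean, inner_zero_right]

lemma intFip_eq (a : Eu p) : (∫ z, Ff μ z * ip a z ∂μ) = ip a (vv μ) := by
  have h : (fun z => Ff μ z * ip a z) = fun z => (inner ℝ a (Ff μ z • z) : ℝ) := by
    funext z; simp only [ip, real_inner_smul_right]
  rw [h, integral_inner (int_Fsmul μ hmom) a]
  rfl

lemma intIpIp_eq (a b : Eu p) : (∫ z, ip a z * ip b z ∂μ) = ip a (Tt μ b) := by
  have h : (fun z => ip a z * ip b z) = fun z => (inner ℝ a ((inner ℝ z b : ℝ) • z) : ℝ) := by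
    funext z
    simp only [ip, real_inner_smul_right]
    rw [real_inner_comm z b]; ring
  rw [h, integral_inner (int_Tsmul μ hmom b) a]
  rfl

lemma Tsym (a b : Eu p) : ip a (Tt μ b) = ip b (Tt μ a) := by
  rw [← intIpIp_eq μ hmom a b, ← intIpIp_eq μ hmom b a]
  exact integral_congr_ae (ae_of_all _ fun z => mul_comm _ _)

omit hmom in
lemma mme_nonneg : 0 ≤ mme μ := integral_nonneg fun z => by positivity

lemma T_bound (w : Eu p) : ‖Tt μ w‖ ≤ mme μ * ‖w‖ := by
  refine (norm_integral_le_integral_norm _).trans ?_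
  have h : (∫ z, ‖(inner ℝ z w : ℝ) • z‖ ∂μ) ≤ ∫ z, ‖z‖ ^ 2 * ‖w‖ ∂μ := by
    refine integral_mono (int_Tsmul μ hmom w).norm ((int_pow2 μ hmom).mul_const _)
      fun z => ?_
    rw [norm_smul, Real.norm_eq_abs]
    have h1 : |(inner ℝ z w : ℝ)| ≤ ‖z‖ * ‖w‖ := abs_real_inner_le_norm z w
    calc |(inner ℝ z w : ℝ)| * ‖z‖ ≤ (‖z‖ * ‖w‖) * ‖z‖ :=
          mul_le_mul_of_nonneg_right h1 (norm_nonneg z)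
      _ = ‖z‖ ^ 2 * ‖w‖ := by ring
  refine h.trans ?_
  rw [integral_mul_const]
  rfl

lemma T_cont : Continuous (Tt μ) := by
  have hadd : ∀ w₁ w₂ : Eu p, Tt μ (w₁ + w₂) = Tt μ w₁ + Tt μ w₂ := by
    intro w₁ w₂
    simp only [Tt]
    rw [← integral_add (int_Tsmul μ hmom w₁) (int_Tsmul μ hmom w₂)]
    congr 1; funext z
    rw [inner_add_right, add_smul]
  have hsmul : ∀ (r : ℝ) (w : Eu p), Tt μ (r • w) = r • Tt μ w := by
    intro r w
    simp only [Tt]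
    rw [← integral_smul]
    congr 1; funext z
    rw [real_inner_smul_right, mul_smul]
  exact LinearMap.continuous_of_finiteDimensional
    { toFun := Tt μ, map_add' := hadd, map_smul' := hsmul }

lemma int_q : Integrable (fun z => ip (Tt μ z) (Tt μ (Tt μ z))) μ := by
  have hT := T_cont μ hmom
  refine ((int_pow2 μ hmom).const_mul (mme μ ^ 3)).mono'
    (Continuous.aestronglyMeasurable ?_) (ae_of_all _ fun z => ?_)
  · exact Continuous.inner hT (hT.comp hT)
  · rw [Real.norm_eq_abs]
    have hm := mme_nonneg μ
    have h1 : |ip (Tt μ z) (Tt μ (Tt μ z))| ≤ ‖Tt μ z‖ * ‖Tt μ (Tt μ z)‖ :=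
      abs_real_inner_le_norm _ _
    have h2 := T_bound μ hmom z
    have h3 := T_bound μ hmom (Tt μ z)
    have h4 := T_bound μ hmom (Tt μ (Tt μ z))
    have hz : (0:ℝ) ≤ ‖z‖ := norm_nonneg z
    calc |ip (Tt μ z) (Tt μ (Tt μ z))| ≤ ‖Tt μ z‖ * ‖Tt μ (Tt μ z)‖ := h1
      _ ≤ (mme μ * ‖z‖) * (mme μ * ‖Tt μ z‖) :=
          mul_le_mul h2 h3 (norm_nonneg _) (by positivity)
      _ ≤ (mme μ * ‖z‖) * (mme μ * (mme μ * ‖z‖)) := by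
          refine mul_le_mul_of_nonneg_left (mul_le_mul_of_nonneg_left h2 hm) (by positivity)
      _ = mme μ ^ 3 * ‖z‖ ^ 2 := by ring

end Eqs

def Mform (c0 cf c2 la lb lc ld ma mb mc md nab nac nad : ℝ) (a b c d : Eu p) (z : Eu p) : ℝ :=
  c0 + cf * Ff μ z + c2 * Ff μ z ^ 2 + la * ip a z + lb * ip b z + lc * ip c z + ld * ip d z + ma * (Ff μ z * ip a z) + mb * (Ff μ z * ip b z) + mc * (Ff μ z * ip c z) + md * (Ff μ z * ip d z) + nab * (ip a z * ip b z) + nac * (ip a z * ip c z) + nad * (ip a z * ip d z)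

section Master

variable [IsProbabilityMeasure μ] (hmean : (∫ x, x ∂μ) = 0)
    (hmom : Integrable (fun x => ‖x‖ ^ 4) μ)
include hmean hmom

lemma master (c0 cf c2 la lb lc ld ma mb mc md nab nac nad : ℝ) (a b c d : Eu p) :
    (∫ z, Mform μ c0 cf c2 la lb lc ld ma mb mc md nab nac nad a b c d z ∂μ)
      = c0 + c2 * sig2 μ + ma * ip a (vv μ) + mb * ip b (vv μ) + mc * ip c (vv μ)
        + md * ip d (vv μ) + nab * ip a (Tt μ b) + nac * ip a (Tt μ c)
        + nad * ip a (Tt μ d) := by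
  have i1 : Integrable (fun z : Eu p => c0) μ := integrable_const c0
  have i2 : Integrable (fun z : Eu p => cf * Ff μ z) μ := (int_F μ hmom).const_mul cf
  have i3 : Integrable (fun z : Eu p => c2 * Ff μ z ^ 2) μ := (int_F2 μ hmom).const_mul c2
  have i4 : Integrable (fun z : Eu p => la * ip a z) μ := (int_ip μ hmom a).const_mul la
  have i5 : Integrable (fun z : Eu p => lb * ip b z) μ := (int_ip μ hmom b).const_mul lb
  have i6 : Integrable (fun z : Eu p => lc * ip c z) μ := (int_ip μ hmom c).const_mul lc
  have i7 : Integrable (fun z : Eu p => ld * ip d z) μ := (int_ip μ hmom d).const_mul ld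
  have i8 : Integrable (fun z : Eu p => ma * (Ff μ z * ip a z)) μ := (int_Fip μ hmom a).const_mul ma
  have i9 : Integrable (fun z : Eu p => mb * (Ff μ z * ip b z)) μ := (int_Fip μ hmom b).const_mul mb
  have i10 : Integrable (fun z : Eu p => mc * (Ff μ z * ip c z)) μ := (int_Fip μ hmom c).const_mul mc
  have i11 : Integrable (fun z : Eu p => md * (Ff μ z * ip d z)) μ := (int_Fip μ hmom d).const_mul md
  have i12 : Integrable (fun z : Eu p => nab * (ip a z * ip b z)) μ := (int_ipip μ hmom a b).const_mul nab
  have i13 : Integrable (fun z : Eu p => nac * (ip a z * ip c z)) μ := (int_ipip μ hmom a c).const_mul nac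
  have i14 : Integrable (fun z : Eu p => nad * (ip a z * ip d z)) μ := (int_ipip μ hmom a d).const_mul nad
  have I2 : Integrable (fun z : Eu p => c0 + cf * Ff μ z) μ := i1.add i2
  have I3 : Integrable (fun z : Eu p => c0 + cf * Ff μ z + c2 * Ff μ z ^ 2) μ := I2.add i3
  have I4 : Integrable (fun z : Eu p => c0 + cf * Ff μ z + c2 * Ff μ z ^ 2 + la * ip a z) μ := I3.add i4
  have I5 : Integrable (fun z : Eu p => c0 + cf * Ff μ z + c2 * Ff μ z ^ 2 + la * ip a z + lb * ip b z) μ := I4.add i5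
  have I6 : Integrable (fun z : Eu p => c0 + cf * Ff μ z + c2 * Ff μ z ^ 2 + la * ip a z + lb * ip b z + lc * ip c z) μ := I5.add i6
  have I7 : Integrable (fun z : Eu p => c0 + cf * Ff μ z + c2 * Ff μ z ^ 2 + la * ip a z + lb * ip b z + lc * ip c z + ld * ip d z) μ := I6.add i7
  have I8 : Integrable (fun z : Eu p => c0 + cf * Ff μ z + c2 * Ff μ z ^ 2 + la * ip a z + lb * ip b z + lc * ip c z + ld * ip d z + ma * (Ff μ z * ip a z)) μ := I7.add i8
  have I9 : Integrable (fun z : Eu p => c0 + cf * Ff μ z + c2 * Ff μ z ^ 2 + la * ip a z + lb * ip b z + lc * ip c z + ld * ip d z + ma * (Ff μ z * ip a z) + mb * (Ff μ z * ip b z)) μ := I8.add i9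
  have I10 : Integrable (fun z : Eu p => c0 + cf * Ff μ z + c2 * Ff μ z ^ 2 + la * ip a z + lb * ip b z + lc * ip c z + ld * ip d z + ma * (Ff μ z * ip a z) + mb * (Ff μ z * ip b z) + mc * (Ff μ z * ip c z)) μ := I9.add i10
  have I11 : Integrable (fun z : Eu p => c0 + cf * Ff μ z + c2 * Ff μ z ^ 2 + la * ip a z + lb * ip b z + lc * ip c z + ld * ip d z + ma * (Ff μ z * ip a z) + mb * (Ff μ z * ip b z) + mc * (Ff μ z * ip c z) + md * (Ff μ z * ip d z)) μ := I10.add i11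
  have I12 : Integrable (fun z : Eu p => c0 + cf * Ff μ z + c2 * Ff μ z ^ 2 + la * ip a z + lb * ip b z + lc * ip c z + ld * ip d z + ma * (Ff μ z * ip a z) + mb * (Ff μ z * ip b z) + mc * (Ff μ z * ip c z) + md * (Ff μ z * ip d z) + nab * (ip a z * ip b z)) μ := I11.add i12
  have I13 : Integrable (fun z : Eu p => c0 + cf * Ff μ z + c2 * Ff μ z ^ 2 + la * ip a z + lb * ip b z + lc * ip c z + ld * ip d z + ma * (Ff μ z * ip a z) + mb * (Ff μ z * ip b z) + mc * (Ff μ z * ip c z) + md * (Ff μ z * ip d z) + nab * (ip a z * ip b z) + nac * (ip a z * ip c z)) μ := I12.add i13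
  simp only [Mform]
  have E14 : (∫ z, c0 + cf * Ff μ z + c2 * Ff μ z ^ 2 + la * ip a z + lb * ip b z + lc * ip c z + ld * ip d z + ma * (Ff μ z * ip a z) + mb * (Ff μ z * ip b z) + mc * (Ff μ z * ip c z) + md * (Ff μ z * ip d z) + nab * (ip a z * ip b z) + nac * (ip a z * ip c z) + nad * (ip a z * ip d z) ∂μ) = (∫ z, c0 + cf * Ff μ z + c2 * Ff μ z ^ 2 + la * ip a z + lb * ip b z + lc * ip c z + ld * ip d z + ma * (Ff μ z * ip a z) + mb * (Ff μ z * ip b z) + mc * (Ff μ z * ip c z) + md * (Ff μ z * ip d z) + nab * (ip a z * ip b z) + nac * (ip a z * ip c z) ∂μ) + ∫ z, nad * (ip a z * ip d z) ∂μ := integral_add I13 i14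
  have E13 : (∫ z, c0 + cf * Ff μ z + c2 * Ff μ z ^ 2 + la * ip a z + lb * ip b z + lc * ip c z + ld * ip d z + ma * (Ff μ z * ip a z) + mb * (Ff μ z * ip b z) + mc * (Ff μ z * ip c z) + md * (Ff μ z * ip d z) + nab * (ip a z * ip b z) + nac * (ip a z * ip c z) ∂μ) = (∫ z, c0 + cf * Ff μ z + c2 * Ff μ z ^ 2 + la * ip a z + lb * ip b z + lc * ip c z + ld * ip d z + ma * (Ff μ z * ip a z) + mb * (Ff μ z * ip b z) + mc * (Ff μ z * ip c z) + md * (Ff μ z * ip d z) + nab * (ip a z * ip b z) ∂μ) + ∫ z, nac * (ip a z * ip c z) ∂μ := integral_add I12 i13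
  have E12 : (∫ z, c0 + cf * Ff μ z + c2 * Ff μ z ^ 2 + la * ip a z + lb * ip b z + lc * ip c z + ld * ip d z + ma * (Ff μ z * ip a z) + mb * (Ff μ z * ip b z) + mc * (Ff μ z * ip c z) + md * (Ff μ z * ip d z) + nab * (ip a z * ip b z) ∂μ) = (∫ z, c0 + cf * Ff μ z + c2 * Ff μ z ^ 2 + la * ip a z + lb * ip b z + lc * ip c z + ld * ip d z + ma * (Ff μ z * ip a z) + mb * (Ff μ z * ip b z) + mc * (Ff μ z * ip c z) + md * (Ff μ z * ip d z) ∂μ) + ∫ z, nab * (ip a z * ip b z) ∂μ := integral_add I11 i12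
  have E11 : (∫ z, c0 + cf * Ff μ z + c2 * Ff μ z ^ 2 + la * ip a z + lb * ip b z + lc * ip c z + ld * ip d z + ma * (Ff μ z * ip a z) + mb * (Ff μ z * ip b z) + mc * (Ff μ z * ip c z) + md * (Ff μ z * ip d z) ∂μ) = (∫ z, c0 + cf * Ff μ z + c2 * Ff μ z ^ 2 + la * ip a z + lb * ip b z + lc * ip c z + ld * ip d z + ma * (Ff μ z * ip a z) + mb * (Ff μ z * ip b z) + mc * (Ff μ z * ip c z) ∂μ) + ∫ z, md * (Ff μ z * ip d z) ∂μ := integral_add I10 i11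
  have E10 : (∫ z, c0 + cf * Ff μ z + c2 * Ff μ z ^ 2 + la * ip a z + lb * ip b z + lc * ip c z + ld * ip d z + ma * (Ff μ z * ip a z) + mb * (Ff μ z * ip b z) + mc * (Ff μ z * ip c z) ∂μ) = (∫ z, c0 + cf * Ff μ z + c2 * Ff μ z ^ 2 + la * ip a z + lb * ip b z + lc * ip c z + ld * ip d z + ma * (Ff μ z * ip a z) + mb * (Ff μ z * ip b z) ∂μ) + ∫ z, mc * (Ff μ z * ip c z) ∂μ := integral_add I9 i10
  have E9 : (∫ z, c0 + cf * Ff μ z + c2 * Ff μ z ^ 2 + la * ip a z + lb * ip b z + lc * ip c z + ld * ip d z + ma * (Ff μ z * ip a z) + mb * (Ff μ z * ip b z) ∂μ) = (∫ z, c0 + cf * Ff μ z + c2 * Ff μ z ^ 2 + la * ip a z + lb * ip b z + lc * ip c z + ld * ip d z + ma * (Ff μ z * ip a z) ∂μ) + ∫ z, mb * (Ff μ z * ip b z) ∂μ := integral_add I8 i9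
  have E8 : (∫ z, c0 + cf * Ff μ z + c2 * Ff μ z ^ 2 + la * ip a z + lb * ip b z + lc * ip c z + ld * ip d z + ma * (Ff μ z * ip a z) ∂μ) = (∫ z, c0 + cf * Ff μ z + c2 * Ff μ z ^ 2 + la * ip a z + lb * ip b z + lc * ip c z + ld * ip d z ∂μ) + ∫ z, ma * (Ff μ z * ip a z) ∂μ := integral_add I7 i8
  have E7 : (∫ z, c0 + cf * Ff μ z + c2 * Ff μ z ^ 2 + la * ip a z + lb * ip b z + lc * ip c z + ld * ip d z ∂μ) = (∫ z, c0 + cf * Ff μ z + c2 * Ff μ z ^ 2 + la * ip a z + lb * ip b z + lc * ip c z ∂μ) + ∫ z, ld * ip d z ∂μ := integral_add I6 i7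
  have E6 : (∫ z, c0 + cf * Ff μ z + c2 * Ff μ z ^ 2 + la * ip a z + lb * ip b z + lc * ip c z ∂μ) = (∫ z, c0 + cf * Ff μ z + c2 * Ff μ z ^ 2 + la * ip a z + lb * ip b z ∂μ) + ∫ z, lc * ip c z ∂μ := integral_add I5 i6
  have E5 : (∫ z, c0 + cf * Ff μ z + c2 * Ff μ z ^ 2 + la * ip a z + lb * ip b z ∂μ) = (∫ z, c0 + cf * Ff μ z + c2 * Ff μ z ^ 2 + la * ip a z ∂μ) + ∫ z, lb * ip b z ∂μ := integral_add I4 i5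
  have E4 : (∫ z, c0 + cf * Ff μ z + c2 * Ff μ z ^ 2 + la * ip a z ∂μ) = (∫ z, c0 + cf * Ff μ z + c2 * Ff μ z ^ 2 ∂μ) + ∫ z, la * ip a z ∂μ := integral_add I3 i4
  have E3 : (∫ z, c0 + cf * Ff μ z + c2 * Ff μ z ^ 2 ∂μ) = (∫ z, c0 + cf * Ff μ z ∂μ) + ∫ z, c2 * Ff μ z ^ 2 ∂μ := integral_add I2 i3
  have E2 : (∫ z, c0 + cf * Ff μ z ∂μ) = (∫ z, c0 ∂μ) + ∫ z, cf * Ff μ z ∂μ := integral_add i1 i2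
  rw [E14, E13, E12, E11, E10, E9, E8, E7, E6, E5, E4, E3, E2]
  simp only [integral_const_mul]
  rw [intF_eq μ hmom, intF2_eq μ, intIp_eq μ hmean hmom a, intIp_eq μ hmean hmom b,
    intIp_eq μ hmean hmom c, intIp_eq μ hmean hmom d, intFip_eq μ hmom a, intFip_eq μ hmom b,
    intFip_eq μ hmom c, intFip_eq μ hmom d, intIpIp_eq μ hmom a b, intIpIp_eq μ hmom a c,
    intIpIp_eq μ hmom a d, integral_const]
  simp [measure_univ]

omit hmean in
lemma int_Mform (c0 cf c2 la lb lc ld ma mb mc md nab nac nad : ℝ) (a b c d : Eu p) :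
    Integrable (fun z => Mform μ c0 cf c2 la lb lc ld ma mb mc md nab nac nad a b c d z) μ := by
  simp only [Mform]
  exact ((((((((((((((integrable_const c0).add ((int_F μ hmom).const_mul cf)).add
    ((int_F2 μ hmom).const_mul c2)).add ((int_ip μ hmom a).const_mul la)).add
    ((int_ip μ hmom b).const_mul lb)).add ((int_ip μ hmom c).const_mul lc)).add
    ((int_ip μ hmom d).const_mul ld)).add ((int_Fip μ hmom a).const_mul ma)).add
    ((int_Fip μ hmom b).const_mul mb)).add ((int_Fip μ hmom c).const_mul mc)).add
    ((int_Fip μ hmom d).const_mul md)).add ((int_ipip μ hmom a b).const_mul nab)).add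
    ((int_ipip μ hmom a c).const_mul nac)).add ((int_ipip μ hmom a d).const_mul nad))

end Master

def Kf (x y : Eu p) : ℝ :=
  Ff μ x * Ff μ y + sig2 μ - 2 * ip x (vv μ) - 2 * ip y (vv μ) + 4 * ip x (Tt μ y)

def Pf (x₁ x₂ : Eu p) : ℝ :=
  sig2 μ * Ff μ x₁ - 2 * Ff μ x₁ * ip x₂ (vv μ) + sig2 μ * Ff μ x₂ - 2 * Ff μ x₂ * ip x₁ (vv μ)
    - 2 * ip (vv μ) (vv μ) + 4 * ip (Tt μ x₂) (vv μ) + 4 * ip x₁ (Tt μ (vv μ))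
    - 8 * ip x₁ (Tt μ (Tt μ x₂))

def Gf (x : Eu p) : ℝ :=
  sig2 μ * Ff μ x ^ 2 - 4 * Ff μ x * ip (vv μ) (vv μ) + 8 * Ff μ x * ip x (Tt μ (vv μ))
    + sig2 μ ^ 2 - 4 * sig2 μ * ip x (vv μ) + 4 * ip x (vv μ) ^ 2
    + 4 * ip (Tt μ (vv μ)) (vv μ) - 8 * ip (Tt μ (Tt μ x)) (vv μ)
    - 8 * ip x (Tt μ (Tt μ (vv μ))) + 16 * ip x (Tt μ (Tt μ (Tt μ x)))

section Stages

variable [IsProbabilityMeasure μ] (hmean : (∫ x, x ∂μ) = 0)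
    (hmom : Integrable (fun x => ‖x‖ ^ 4) μ)
include hmean hmom

lemma stage_intV (x : Eu p) : (∫ z, Vf μ x z ∂μ) = Ff μ x := by
  rw [show (fun z => Vf μ x z)
      = fun z => Mform μ (Ff μ x) 1 0 (-2) 0 0 0 0 0 0 0 0 0 0 x x x x z from
      funext fun z => by simp only [Vf, Mform]; ring,
    master μ hmean hmom]
  ring

lemma stage_K (x y : Eu p) : (∫ z, Vf μ x z * Vf μ y z ∂μ) = Kf μ x y := by
  rw [show (fun z => Vf μ x z * Vf μ y z)
      = fun z => Mform μ (Ff μ x * Ff μ y) (Ff μ x + Ff μ y) 1 (-2 * Ff μ y) (-2 * Ff μ x)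
          0 0 (-2) (-2) 0 0 4 0 0 x y y y z from
      funext fun z => by simp only [Vf, Mform]; ring,
    master μ hmean hmom]
  simp only [Kf]; ring

lemma stage_VF (x : Eu p) : (∫ z, Vf μ x z * Ff μ z ∂μ) = sig2 μ - 2 * ip x (vv μ) := by
  rw [show (fun z => Vf μ x z * Ff μ z)
      = fun z => Mform μ 0 (Ff μ x) 1 0 0 0 0 (-2) 0 0 0 0 0 0 x x x x z from
      funext fun z => by simp only [Vf, Mform]; ring,
    master μ hmean hmom]
  ring

lemma stage_T2 (x : Eu p) :
    (∫ z, Vf μ x z * (sig2 μ - 2 * ip (vv μ) z) ∂μ)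
      = Ff μ x * sig2 μ - 2 * ip (vv μ) (vv μ) + 4 * ip x (Tt μ (vv μ)) := by
  rw [show (fun z => Vf μ x z * (sig2 μ - 2 * ip (vv μ) z))
      = fun z => Mform μ (Ff μ x * sig2 μ) (sig2 μ) 0 (-2 * sig2 μ) (-2 * Ff μ x)
          0 0 0 (-2) 0 0 4 0 0 x (vv μ) x x z from
      funext fun z => by simp only [Vf, Mform]; ring,
    master μ hmean hmom]
  ring

lemma stage_T2b :
    (∫ z, Ff μ z * (Ff μ z * sig2 μ - 2 * ip (vv μ) (vv μ) + 4 * ip z (Tt μ (vv μ))) ∂μ)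
      = sig2 μ ^ 2 + 4 * ip (vv μ) (Tt μ (vv μ)) := by
  rw [show (fun z => Ff μ z * (Ff μ z * sig2 μ - 2 * ip (vv μ) (vv μ) + 4 * ip z (Tt μ (vv μ))))
      = fun z => Mform μ 0 (-2 * ip (vv μ) (vv μ)) (sig2 μ) 0 0 0 0 4 0 0 0 0 0 0
          (Tt μ (vv μ)) (vv μ) (vv μ) (vv μ) z from
      funext fun z => by
        simp only [Mform]
        rw [ipcomm z (Tt μ (vv μ))]; ring,
    master μ hmean hmom, ipcomm (Tt μ (vv μ)) (vv μ)]
  ring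

lemma stage_J (x₁ x₂ : Eu p) : (∫ z, Vf μ x₁ z * Kf μ x₂ z ∂μ) = Pf μ x₁ x₂ := by
  rw [show (fun z => Vf μ x₁ z * Kf μ x₂ z)
      = fun z => Mform μ (Ff μ x₁ * (sig2 μ - 2 * ip x₂ (vv μ)))
          (Ff μ x₁ * Ff μ x₂ + (sig2 μ - 2 * ip x₂ (vv μ))) (Ff μ x₂)
          (-2 * (sig2 μ - 2 * ip x₂ (vv μ))) (-2 * Ff μ x₁) (4 * Ff μ x₁) 0
          (-2 * Ff μ x₂) (-2) 4 0 4 (-8) 0 x₁ (vv μ) (Tt μ x₂) x₁ z from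
      funext fun z => by
        simp only [Vf, Kf, Mform]
        rw [Tsym μ hmom x₂ z, ipcomm z (Tt μ x₂), ipcomm z (vv μ)]; ring,
    master μ hmean hmom]
  simp only [Pf]; ring

lemma stage_G (x : Eu p) : (∫ z, Vf μ x z * Pf μ x z ∂μ) = Gf μ x := by
  rw [show (fun z => Vf μ x z * Pf μ x z)
      = fun z => Mform μ
          (Ff μ x * (sig2 μ * Ff μ x - 2 * ip (vv μ) (vv μ) + 4 * ip x (Tt μ (vv μ))))
          ((sig2 μ * Ff μ x - 2 * ip (vv μ) (vv μ) + 4 * ip x (Tt μ (vv μ)))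
            + Ff μ x * (sig2 μ - 2 * ip x (vv μ)))
          (sig2 μ - 2 * ip x (vv μ))
          (-2 * (sig2 μ * Ff μ x - 2 * ip (vv μ) (vv μ) + 4 * ip x (Tt μ (vv μ))))
          (Ff μ x * (-2 * Ff μ x)) (Ff μ x * 4) (Ff μ x * (-8))
          (-2 * (sig2 μ - 2 * ip x (vv μ))) (-2 * Ff μ x) 4 (-8)
          (4 * Ff μ x) (-8) 16 x (vv μ) (Tt μ (vv μ)) (Tt μ (Tt μ x)) z from
      funext fun z => by
        simp only [Vf, Pf, Mform]
        rw [show ip (Tt μ z) (vv μ) = ip (Tt μ (vv μ)) z from by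
            rw [ipcomm (Tt μ z) (vv μ), Tsym μ hmom (vv μ) z, ipcomm z (Tt μ (vv μ))],
          show ip x (Tt μ (Tt μ z)) = ip (Tt μ (Tt μ x)) z from by
            rw [Tsym μ hmom x (Tt μ z), ipcomm (Tt μ z) (Tt μ x), Tsym μ hmom (Tt μ x) z,
              ipcomm z (Tt μ (Tt μ x))],
          ipcomm z (vv μ)]
        ring,
    master μ hmean hmom]
  simp only [Gf]; ring

lemma stage_final :
    (∫ z, Gf μ z ∂μ) = 2 * sig2 μ ^ 2 + 16 * ip (vv μ) (Tt μ (vv μ)) + 16 * Ss μ := by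
  have hq := (int_q μ hmom).const_mul (16 : ℝ)
  have hM := int_Mform μ hmom (sig2 μ ^ 2 + 4 * ip (Tt μ (vv μ)) (vv μ))
      (-4 * ip (vv μ) (vv μ)) (sig2 μ) (-4 * sig2 μ) 0 0 (-16) 0 0 8 0 4 0 0
      (vv μ) (vv μ) (Tt μ (vv μ)) (Tt μ (Tt μ (vv μ)))
  have hsplit : (∫ z, Gf μ z ∂μ)
      = (∫ z, Mform μ (sig2 μ ^ 2 + 4 * ip (Tt μ (vv μ)) (vv μ)) (-4 * ip (vv μ) (vv μ))
          (sig2 μ) (-4 * sig2 μ) 0 0 (-16) 0 0 8 0 4 0 0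
          (vv μ) (vv μ) (Tt μ (vv μ)) (Tt μ (Tt μ (vv μ))) z ∂μ)
        + ∫ z, 16 * ip (Tt μ z) (Tt μ (Tt μ z)) ∂μ := by
    rw [show (fun z => Gf μ z)
        = fun z => Mform μ (sig2 μ ^ 2 + 4 * ip (Tt μ (vv μ)) (vv μ)) (-4 * ip (vv μ) (vv μ))
            (sig2 μ) (-4 * sig2 μ) 0 0 (-16) 0 0 8 0 4 0 0
            (vv μ) (vv μ) (Tt μ (vv μ)) (Tt μ (Tt μ (vv μ))) z
            + 16 * ip (Tt μ z) (Tt μ (Tt μ z)) from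
        funext fun z => by
          simp only [Gf, Mform]
          rw [show ip z (Tt μ (vv μ)) = ip (Tt μ (vv μ)) z from ipcomm _ _,
            show ip z (vv μ) = ip (vv μ) z from ipcomm _ _,
            show ip (Tt μ (Tt μ z)) (vv μ) = ip (Tt μ (Tt μ (vv μ))) z from by
              rw [ipcomm (Tt μ (Tt μ z)) (vv μ), Tsym μ hmom (vv μ) (Tt μ z),
                ipcomm (Tt μ z) (Tt μ (vv μ)), Tsym μ hmom (Tt μ (vv μ)) z,
                ipcomm z (Tt μ (Tt μ (vv μ)))],
            show ip z (Tt μ (Tt μ (vv μ))) = ip (Tt μ (Tt μ (vv μ))) z from ipcomm _ _,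
            show ip z (Tt μ (Tt μ (Tt μ z))) = ip (Tt μ z) (Tt μ (Tt μ z)) from by
              rw [Tsym μ hmom z (Tt μ (Tt μ z)), ipcomm (Tt μ (Tt μ z)) (Tt μ z)]]
          ring]
    exact integral_add hM hq
  rw [hsplit, master μ hmean hmom, integral_const_mul, ipcomm (Tt μ (vv μ)) (vv μ)]
  show _ = 2 * sig2 μ ^ 2 + 16 * ip (vv μ) (Tt μ (vv μ)) + 16 * Ss μ
  simp only [Ss]
  ring

lemma sigQuad_eq : sigQuad μ = Ss μ := by
  have e1 : ∀ x₁ x₂ : Eu p,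
      (∫ z, (inner ℝ x₁ z : ℝ) * (inner ℝ z x₂ : ℝ) ∂μ) = ip x₁ (Tt μ x₂) := by
    intro x₁ x₂
    rw [show (fun z => (inner ℝ x₁ z : ℝ) * (inner ℝ z x₂ : ℝ)) = fun z => ip x₁ z * ip x₂ z from
        funext fun z => by simp only [ip]; rw [real_inner_comm z x₂]]
    exact intIpIp_eq μ hmom x₁ x₂
  have e2 : ∀ x₁ : Eu p,
      (∫ x₂, (∫ z, (inner ℝ x₁ z : ℝ) * (inner ℝ z x₂ : ℝ) ∂μ) ^ 2 ∂μ)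
        = ip (Tt μ x₁) (Tt μ (Tt μ x₁)) := by
    intro x₁
    rw [show (fun x₂ => (∫ z, (inner ℝ x₁ z : ℝ) * (inner ℝ z x₂ : ℝ) ∂μ) ^ 2)
        = fun x₂ => ip (Tt μ x₁) x₂ * ip (Tt μ x₁) x₂ from funext fun x₂ => by
          rw [e1 x₁ x₂, Tsym μ hmom x₁ x₂, ipcomm x₂ (Tt μ x₁)]; ring]
    exact intIpIp_eq μ hmom (Tt μ x₁) (Tt μ x₁)
  simp only [sigQuad]
  simp_rw [e2]
  rfl

end Stages

lemma Wv (x y : Eu p) : Wfun μ x y = (Bmom μ)⁻¹ * Vf μ x y := by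
  simp only [Wfun, Vf, Ff, ip, Bmom, mme]
  rw [norm_sub_sq_real]
  ring

end WM

/-- Lemma: `E[W₁₂W₁₃W₂₄W₃₄] − 4E[W₁₂W₁₃W₂₄W₄₅] + 2(E[W₁₂W₁₃])² = 16 B_X⁻⁴ E[(X₁ᵀΣ_xX₂)²]`. -/
theorem W_moments_identity (p : ℕ) (μ : Measure (EuclideanSpace ℝ (Fin p)))
    [IsProbabilityMeasure μ]
    (hmean : (∫ x, x ∂μ) = 0)
    (hmom : Integrable (fun x => ‖x‖ ^ 4) μ)
    (hB : 0 < Bmom μ) :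
    (∫ x₁, (∫ x₂, (∫ x₃, (∫ x₄,
        Wfun μ x₁ x₂ * Wfun μ x₁ x₃ * Wfun μ x₂ x₄ * Wfun μ x₃ x₄ ∂μ) ∂μ) ∂μ) ∂μ)
      - 4 * (∫ x₁, (∫ x₂, (∫ x₃, (∫ x₄, (∫ x₅,
          Wfun μ x₁ x₂ * Wfun μ x₁ x₃ * Wfun μ x₂ x₄ * Wfun μ x₄ x₅ ∂μ) ∂μ) ∂μ) ∂μ) ∂μ)
      + 2 * (∫ x₁, (∫ x₂, (∫ x₃, Wfun μ x₁ x₂ * Wfun μ x₁ x₃ ∂μ) ∂μ) ∂μ) ^ 2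
    = 16 * Bmom μ ^ (-(4 : ℝ)) * sigQuad μ := by
  have hW : ∀ x y : EuclideanSpace ℝ (Fin p), Wfun μ x y = (Bmom μ)⁻¹ * WM.Vf μ x y := WM.Wv μ
  have s1 : ∀ x₁ x₂ x₃ : EuclideanSpace ℝ (Fin p),
      (∫ x₄, Wfun μ x₁ x₂ * Wfun μ x₁ x₃ * Wfun μ x₂ x₄ * Wfun μ x₃ x₄ ∂μ)
        = Wfun μ x₁ x₂ * Wfun μ x₁ x₃ * ((Bmom μ)⁻¹ * (Bmom μ)⁻¹) * WM.Kf μ x₂ x₃ := by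
    intro x₁ x₂ x₃
    rw [show (fun x₄ => Wfun μ x₁ x₂ * Wfun μ x₁ x₃ * Wfun μ x₂ x₄ * Wfun μ x₃ x₄)
        = fun x₄ => (Wfun μ x₁ x₂ * Wfun μ x₁ x₃ * ((Bmom μ)⁻¹ * (Bmom μ)⁻¹))
            * (WM.Vf μ x₂ x₄ * WM.Vf μ x₃ x₄) from
        funext fun x₄ => by rw [hW x₂ x₄, hW x₃ x₄]; ring,
      integral_const_mul, WM.stage_K μ hmean hmom x₂ x₃]
  have s2 : ∀ x₁ x₂ : EuclideanSpace ℝ (Fin p),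
      (∫ x₃, Wfun μ x₁ x₂ * Wfun μ x₁ x₃ * ((Bmom μ)⁻¹ * (Bmom μ)⁻¹) * WM.Kf μ x₂ x₃ ∂μ)
        = Wfun μ x₁ x₂ * ((Bmom μ)⁻¹ * (Bmom μ)⁻¹ * (Bmom μ)⁻¹) * WM.Pf μ x₁ x₂ := by
    intro x₁ x₂
    rw [show (fun x₃ => Wfun μ x₁ x₂ * Wfun μ x₁ x₃ * ((Bmom μ)⁻¹ * (Bmom μ)⁻¹) * WM.Kf μ x₂ x₃)
        = fun x₃ => (Wfun μ x₁ x₂ * ((Bmom μ)⁻¹ * (Bmom μ)⁻¹ * (Bmom μ)⁻¹))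
            * (WM.Vf μ x₁ x₃ * WM.Kf μ x₂ x₃) from
        funext fun x₃ => by rw [hW x₁ x₃]; ring,
      integral_const_mul, WM.stage_J μ hmean hmom x₁ x₂]
  have s3 : ∀ x₁ : EuclideanSpace ℝ (Fin p),
      (∫ x₂, Wfun μ x₁ x₂ * ((Bmom μ)⁻¹ * (Bmom μ)⁻¹ * (Bmom μ)⁻¹) * WM.Pf μ x₁ x₂ ∂μ)
        = ((Bmom μ)⁻¹ * (Bmom μ)⁻¹ * (Bmom μ)⁻¹ * (Bmom μ)⁻¹) * WM.Gf μ x₁ := by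
    intro x₁
    rw [show (fun x₂ => Wfun μ x₁ x₂ * ((Bmom μ)⁻¹ * (Bmom μ)⁻¹ * (Bmom μ)⁻¹) * WM.Pf μ x₁ x₂)
        = fun x₂ => ((Bmom μ)⁻¹ * (Bmom μ)⁻¹ * (Bmom μ)⁻¹ * (Bmom μ)⁻¹) * (WM.Vf μ x₁ x₂ * WM.Pf μ x₁ x₂) from
        funext fun x₂ => by rw [hW x₁ x₂]; ring,
      integral_const_mul, WM.stage_G μ hmean hmom x₁]
  have s4 : (∫ x₁, ((Bmom μ)⁻¹ * (Bmom μ)⁻¹ * (Bmom μ)⁻¹ * (Bmom μ)⁻¹) * WM.Gf μ x₁ ∂μ)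
      = ((Bmom μ)⁻¹ * (Bmom μ)⁻¹ * (Bmom μ)⁻¹ * (Bmom μ)⁻¹)
        * (2 * WM.sig2 μ ^ 2 + 16 * WM.ip (WM.vv μ) (WM.Tt μ (WM.vv μ)) + 16 * WM.Ss μ) := by
    rw [integral_const_mul, WM.stage_final μ hmean hmom]
  have t1 : ∀ x₁ x₂ x₃ x₄ : EuclideanSpace ℝ (Fin p),
      (∫ x₅, Wfun μ x₁ x₂ * Wfun μ x₁ x₃ * Wfun μ x₂ x₄ * Wfun μ x₄ x₅ ∂μ)
        = Wfun μ x₁ x₂ * Wfun μ x₁ x₃ * Wfun μ x₂ x₄ * (Bmom μ)⁻¹ * WM.Ff μ x₄ := by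
    intro x₁ x₂ x₃ x₄
    rw [show (fun x₅ => Wfun μ x₁ x₂ * Wfun μ x₁ x₃ * Wfun μ x₂ x₄ * Wfun μ x₄ x₅)
        = fun x₅ => (Wfun μ x₁ x₂ * Wfun μ x₁ x₃ * Wfun μ x₂ x₄ * (Bmom μ)⁻¹) * WM.Vf μ x₄ x₅ from
        funext fun x₅ => by rw [hW x₄ x₅]; ring,
      integral_const_mul, WM.stage_intV μ hmean hmom x₄]
  have t2 : ∀ x₁ x₂ x₃ : EuclideanSpace ℝ (Fin p),
      (∫ x₄, Wfun μ x₁ x₂ * Wfun μ x₁ x₃ * Wfun μ x₂ x₄ * (Bmom μ)⁻¹ * WM.Ff μ x₄ ∂μ)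
        = Wfun μ x₁ x₂ * Wfun μ x₁ x₃ * ((Bmom μ)⁻¹ * (Bmom μ)⁻¹)
            * (WM.sig2 μ - 2 * WM.ip x₂ (WM.vv μ)) := by
    intro x₁ x₂ x₃
    rw [show (fun x₄ => Wfun μ x₁ x₂ * Wfun μ x₁ x₃ * Wfun μ x₂ x₄ * (Bmom μ)⁻¹ * WM.Ff μ x₄)
        = fun x₄ => (Wfun μ x₁ x₂ * Wfun μ x₁ x₃ * ((Bmom μ)⁻¹ * (Bmom μ)⁻¹))
            * (WM.Vf μ x₂ x₄ * WM.Ff μ x₄) from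
        funext fun x₄ => by rw [hW x₂ x₄]; ring,
      integral_const_mul, WM.stage_VF μ hmean hmom x₂]
  have t3 : ∀ x₁ x₂ : EuclideanSpace ℝ (Fin p),
      (∫ x₃, Wfun μ x₁ x₂ * Wfun μ x₁ x₃ * ((Bmom μ)⁻¹ * (Bmom μ)⁻¹)
          * (WM.sig2 μ - 2 * WM.ip x₂ (WM.vv μ)) ∂μ)
        = Wfun μ x₁ x₂ * (((Bmom μ)⁻¹ * (Bmom μ)⁻¹ * (Bmom μ)⁻¹)
            * (WM.Ff μ x₁ * (WM.sig2 μ - 2 * WM.ip x₂ (WM.vv μ)))) := by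
    intro x₁ x₂
    rw [show (fun x₃ => Wfun μ x₁ x₂ * Wfun μ x₁ x₃ * ((Bmom μ)⁻¹ * (Bmom μ)⁻¹)
          * (WM.sig2 μ - 2 * WM.ip x₂ (WM.vv μ)))
        = fun x₃ => (Wfun μ x₁ x₂ * ((Bmom μ)⁻¹ * (Bmom μ)⁻¹ * (Bmom μ)⁻¹)
            * (WM.sig2 μ - 2 * WM.ip x₂ (WM.vv μ))) * WM.Vf μ x₁ x₃ from
        funext fun x₃ => by rw [hW x₁ x₃]; ring,
      integral_const_mul, WM.stage_intV μ hmean hmom x₁]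
    ring
  have t4 : ∀ x₁ : EuclideanSpace ℝ (Fin p),
      (∫ x₂, Wfun μ x₁ x₂ * (((Bmom μ)⁻¹ * (Bmom μ)⁻¹ * (Bmom μ)⁻¹)
          * (WM.Ff μ x₁ * (WM.sig2 μ - 2 * WM.ip x₂ (WM.vv μ)))) ∂μ)
        = ((Bmom μ)⁻¹ * (Bmom μ)⁻¹ * (Bmom μ)⁻¹ * (Bmom μ)⁻¹) * (WM.Ff μ x₁ * (WM.Ff μ x₁ * WM.sig2 μ
            - 2 * WM.ip (WM.vv μ) (WM.vv μ) + 4 * WM.ip x₁ (WM.Tt μ (WM.vv μ)))) := by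
    intro x₁
    rw [show (fun x₂ => Wfun μ x₁ x₂ * (((Bmom μ)⁻¹ * (Bmom μ)⁻¹ * (Bmom μ)⁻¹)
          * (WM.Ff μ x₁ * (WM.sig2 μ - 2 * WM.ip x₂ (WM.vv μ)))))
        = fun x₂ => (((Bmom μ)⁻¹ * (Bmom μ)⁻¹ * (Bmom μ)⁻¹ * (Bmom μ)⁻¹) * WM.Ff μ x₁)
            * (WM.Vf μ x₁ x₂ * (WM.sig2 μ - 2 * WM.ip (WM.vv μ) x₂)) from
        funext fun x₂ => by rw [hW x₁ x₂, WM.ipcomm x₂ (WM.vv μ)]; ring,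
      integral_const_mul, WM.stage_T2 μ hmean hmom x₁]
    ring
  have t5 : (∫ x₁, ((Bmom μ)⁻¹ * (Bmom μ)⁻¹ * (Bmom μ)⁻¹ * (Bmom μ)⁻¹) * (WM.Ff μ x₁ * (WM.Ff μ x₁ * WM.sig2 μ
          - 2 * WM.ip (WM.vv μ) (WM.vv μ) + 4 * WM.ip x₁ (WM.Tt μ (WM.vv μ)))) ∂μ)
      = ((Bmom μ)⁻¹ * (Bmom μ)⁻¹ * (Bmom μ)⁻¹ * (Bmom μ)⁻¹)
          * (WM.sig2 μ ^ 2 + 4 * WM.ip (WM.vv μ) (WM.Tt μ (WM.vv μ))) := by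
    rw [integral_const_mul, WM.stage_T2b μ hmean hmom]
  have u1 : ∀ x₁ x₂ : EuclideanSpace ℝ (Fin p),
      (∫ x₃, Wfun μ x₁ x₂ * Wfun μ x₁ x₃ ∂μ) = Wfun μ x₁ x₂ * (Bmom μ)⁻¹ * WM.Ff μ x₁ := by
    intro x₁ x₂
    rw [show (fun x₃ => Wfun μ x₁ x₂ * Wfun μ x₁ x₃)
        = fun x₃ => (Wfun μ x₁ x₂ * (Bmom μ)⁻¹) * WM.Vf μ x₁ x₃ from
        funext fun x₃ => by rw [hW x₁ x₃]; ring,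
      integral_const_mul, WM.stage_intV μ hmean hmom x₁]
  have u2 : ∀ x₁ : EuclideanSpace ℝ (Fin p),
      (∫ x₂, Wfun μ x₁ x₂ * (Bmom μ)⁻¹ * WM.Ff μ x₁ ∂μ) = ((Bmom μ)⁻¹ * (Bmom μ)⁻¹) * WM.Ff μ x₁ ^ 2 := by
    intro x₁
    rw [show (fun x₂ => Wfun μ x₁ x₂ * (Bmom μ)⁻¹ * WM.Ff μ x₁)
        = fun x₂ => (((Bmom μ)⁻¹ * (Bmom μ)⁻¹) * WM.Ff μ x₁) * WM.Vf μ x₁ x₂ from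
        funext fun x₂ => by rw [hW x₁ x₂]; ring,
      integral_const_mul, WM.stage_intV μ hmean hmom x₁]
    ring
  have u3 : (∫ x₁, ((Bmom μ)⁻¹ * (Bmom μ)⁻¹) * WM.Ff μ x₁ ^ 2 ∂μ) = ((Bmom μ)⁻¹ * (Bmom μ)⁻¹) * WM.sig2 μ := by
    rw [integral_const_mul, WM.intF2_eq μ]
  simp_rw [s1, s2, s3, t1, t2, t3, t4, u1, u2]
  rw [s4, t5, u3, WM.sigQuad_eq μ hmean hmom]
  have hr : Bmom μ ^ (-(4:ℝ)) = (Bmom μ)⁻¹ ^ 4 := by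
    rw [show (-(4:ℝ)) = ((-4 : ℤ) : ℝ) by norm_num, Real.rpow_intCast, inv_pow, zpow_neg]
    norm_cast
  rw [hr]
  ring


end
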